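/- arXiv:1605.01783 — 2 statements merged into one kernel-verified Lean document; each statement's English description precedes it below -/
import Mathlib

section
/- For every irrational real number α, the inequality |α - p/q| < 1/(√5 · q²) has infinitely many rational solutions p/q. -/
/-!
Let `αₙ` be the complete quotients and `pₙ / qₙ` the convergents of the continued fraction of `α`.
Then `|α - pₙ / qₙ| = 1 / (qₙ² (αₙ₊₁ + qₙ₋₁ / qₙ))`, so it suffices to find infinitely many `n`
with `√5 < αₙ₊₁ + qₙ₋₁ / qₙ`. If this fails at `n` and `n + 1`, then `u = αₙ₊₂` and
`w = qₙ / qₙ₊₁` satisfy `u + w ≤ √5` and `u⁻¹ + w⁻¹ ≤ √5`. Multiplying the two gives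
`w + w⁻¹ ≤ √5 = φ + φ⁻¹`, and since `w` is rational this forces `φ⁻¹ < w`. Failure at three
consecutive indices is therefore impossible: it would give
`φ⁻¹ < qₙ₊₁ / qₙ₊₂ ≤ (1 + qₙ / qₙ₊₁)⁻¹ < (1 + φ⁻¹)⁻¹ = φ⁻¹`.
-/

open Real
open scoped goldenRatio

theorem inv_goldenRatio_lt_of_add_le_sqrt_five {u w : ℝ} (hu : 0 < u) (hw : 0 < w)
    (hw_ne : w ≠ φ⁻¹) (h : u + w ≤ √5) (h_inv : u⁻¹ + w⁻¹ ≤ √5) : φ⁻¹ < w := by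
  have hsqrt : √5 = φ + φ⁻¹ := by rw [inv_goldenRatio, ← goldenRatio_sub_goldenConj]; ring
  have h_prod : 1 ≤ (√5 - w) * (√5 - w⁻¹) := by
    calc (1 : ℝ) = u * u⁻¹ := (mul_inv_cancel₀ hu.ne').symm
      _ ≤ (√5 - w) * (√5 - w⁻¹) :=
        mul_le_mul (by linarith) (by linarith) (inv_nonneg.mpr hu.le) (by linarith)
  have h_sum : w + w⁻¹ ≤ φ + φ⁻¹ := by
    have h5 : √5 * √5 = 5 := mul_self_sqrt (by norm_num)
    have h_expand : (√5 - w) * (√5 - w⁻¹) = 6 - √5 * (w + w⁻¹) := by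
      field_simp
      linear_combination w * h5
    rw [← hsqrt]
    nlinarith [sqrt_pos.mpr (show (0 : ℝ) < 5 by norm_num)]
  -- `w` lies between the two roots `φ⁻¹` and `φ` of `w² - √5 w + 1`.
  have h_between : (w - φ) * (w - φ⁻¹) ≤ 0 := by
    have : (w - φ) * (w - φ⁻¹) = w * ((w + w⁻¹) - (φ + φ⁻¹)) := by
      linear_combination mul_inv_cancel₀ goldenRatio_ne_zero - mul_inv_cancel₀ hw.ne'
    rw [this]
    exact mul_nonpos_of_nonneg_of_nonpos hw.le (by linarith)
  by_contra! hle
  have hlt : w < φ⁻¹ := lt_of_le_of_ne hle hw_ne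
  have hφ_inv_lt : φ⁻¹ < φ := by
    have := one_lt_goldenRatio
    exact (inv_lt_one_of_one_lt₀ this).trans this
  exact (mul_pos_of_neg_of_neg (by linarith) (sub_neg.mpr hlt)).not_ge h_between

noncomputable def completeQuot (α : ℝ) : ℕ → ℝ
  | 0 => α
  | n + 1 => (Int.fract (completeQuot α n))⁻¹

/-- `convNum α (n + 1) / convDen α (n + 1)` is the `n`-th convergent `pₙ / qₙ` of `α`;
index `0` holds `p₋₁ = 1` and `q₋₁ = 0`. -/
noncomputable def convNum (α : ℝ) : ℕ → ℤ
  | 0 => 1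
  | 1 => ⌊α⌋
  | n + 2 => ⌊completeQuot α (n + 1)⌋ * convNum α (n + 1) + convNum α n

noncomputable def convDen (α : ℝ) : ℕ → ℤ
  | 0 => 0
  | 1 => 1
  | n + 2 => ⌊completeQuot α (n + 1)⌋ * convDen α (n + 1) + convDen α n

noncomputable def denRatio (α : ℝ) (n : ℕ) : ℝ := convDen α n / convDen α (n + 1)

section ContinuedFraction

variable {α : ℝ}

theorem completeQuot_zero : completeQuot α 0 = α := rfl

theorem completeQuot_succ (n : ℕ) :
    completeQuot α (n + 1) = (Int.fract (completeQuot α n))⁻¹ := rfl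

theorem convNum_succ_succ (n : ℕ) :
    convNum α (n + 2) = ⌊completeQuot α (n + 1)⌋ * convNum α (n + 1) + convNum α n := rfl

theorem convDen_succ_succ (n : ℕ) :
    convDen α (n + 2) = ⌊completeQuot α (n + 1)⌋ * convDen α (n + 1) + convDen α n := rfl

theorem irrational_completeQuot (hα : Irrational α) : ∀ n, Irrational (completeQuot α n)
  | 0 => hα
  | n + 1 => ((irrational_completeQuot hα n).sub_intCast _).inv

theorem one_lt_completeQuot_succ (hα : Irrational α) (n : ℕ) : 1 < completeQuot α (n + 1) :=
  one_lt_inv_iff₀.mpr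
    ⟨Int.fract_pos.mpr ((irrational_completeQuot hα n).ne_int _), Int.fract_lt_one _⟩

theorem one_le_floor_completeQuot_succ (hα : Irrational α) (n : ℕ) :
    1 ≤ ⌊completeQuot α (n + 1)⌋ :=
  Int.le_floor.mpr (by exact_mod_cast (one_lt_completeQuot_succ hα n).le)

theorem floor_add_inv_completeQuot_succ (n : ℕ) :
    ⌊completeQuot α n⌋ + (completeQuot α (n + 1))⁻¹ = completeQuot α n := by
  rw [completeQuot_succ, inv_inv, Int.floor_add_fract]

theorem convDen_pos (hα : Irrational α) : ∀ n, 0 < convDen α (n + 1)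
  | 0 => one_pos
  | 1 => by
    simp only [convDen, mul_one, add_zero]
    linarith [one_le_floor_completeQuot_succ hα 0]
  | n + 2 => by
    rw [convDen_succ_succ]
    have := one_le_floor_completeQuot_succ hα (n + 1)
    have := convDen_pos hα (n + 1)
    have := convDen_pos hα n
    positivity

theorem convDen_nonneg (hα : Irrational α) : ∀ n, 0 ≤ convDen α n
  | 0 => le_rfl
  | n + 1 => (convDen_pos hα n).le

theorem convDen_add_convDen_le (hα : Irrational α) (n : ℕ) :
    convDen α (n + 1) + convDen α n ≤ convDen α (n + 2) := by
  rw [convDen_succ_succ]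
  gcongr
  exact le_mul_of_one_le_left (convDen_nonneg hα _) (one_le_floor_completeQuot_succ hα n)

theorem le_convDen (hα : Irrational α) : ∀ n : ℕ, (n : ℤ) ≤ convDen α (n + 1)
  | 0 => zero_le_one
  | 1 => by simpa [convDen] using convDen_add_convDen_le hα 0
  | n + 2 => by
    have h_add : convDen α (n + 1 + 1) + convDen α (n + 1) ≤ convDen α (n + 2 + 1) :=
      convDen_add_convDen_le hα (n + 1)
    have h_le := le_convDen hα (n + 1)
    have h_pos := convDen_pos hα n
    push_cast at h_le ⊢
    omega

theorem convNum_mul_convDen_sub_convNum_mul_convDen (n : ℕ) :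
    convNum α (n + 1) * convDen α n - convNum α n * convDen α (n + 1) = (-1) ^ (n + 1) := by
  induction n with
  | zero => simp [convNum, convDen]
  | succ n ih =>
    rw [convNum_succ_succ, convDen_succ_succ]
    linear_combination -ih

theorem mul_completeQuot_mul_convDen_add_convDen (hα : Irrational α) (n : ℕ) :
    α * (completeQuot α (n + 1) * convDen α (n + 1) + convDen α n) =
      completeQuot α (n + 1) * convNum α (n + 1) + convNum α n := by
  have h_inv (m : ℕ) : completeQuot α (m + 1) * (completeQuot α (m + 1))⁻¹ = 1 :=
    mul_inv_cancel₀ (one_pos.trans (one_lt_completeQuot_succ hα m)).ne'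
  induction n with
  | zero =>
    have h := floor_add_inv_completeQuot_succ (α := α) 0
    rw [completeQuot_zero] at h
    simp only [convNum, convDen]
    push_cast
    linear_combination -(completeQuot α 1) * h + h_inv 0
  | succ n ih =>
    have h := floor_add_inv_completeQuot_succ (α := α) (n + 1)
    rw [convNum_succ_succ, convDen_succ_succ]
    push_cast
    linear_combination completeQuot α (n + 2) * ih +
      (α * convDen α (n + 1) - convNum α (n + 1)) * (completeQuot α (n + 2) * h - h_inv (n + 1))

theorem mul_convDen_sub_convNum_mul_eq_neg_one_pow (hα : Irrational α) (n : ℕ) :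
    (α * convDen α (n + 1) - convNum α (n + 1)) *
      (completeQuot α (n + 1) * convDen α (n + 1) + convDen α n) = (-1) ^ n := by
  have h_det : ((convNum α (n + 1) * convDen α n - convNum α n * convDen α (n + 1) : ℤ) : ℝ) =
      (-1) ^ (n + 1) := by
    exact_mod_cast convNum_mul_convDen_sub_convNum_mul_convDen n
  push_cast at h_det
  linear_combination convDen α (n + 1) * mul_completeQuot_mul_convDen_add_convDen hα n - h_det

theorem abs_sub_convergent (hα : Irrational α) (n : ℕ) :
    |α - convNum α (n + 1) / convDen α (n + 1)| =
      1 / ((convDen α (n + 1) : ℝ) ^ 2 * (completeQuot α (n + 1) + denRatio α n)) := by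
  have hQ : (0 : ℝ) < convDen α (n + 1) := by exact_mod_cast convDen_pos hα n
  have hQ₀ : (0 : ℝ) ≤ convDen α n := by exact_mod_cast convDen_nonneg hα n
  have hc := one_lt_completeQuot_succ hα n
  have hD : 0 < completeQuot α (n + 1) * convDen α (n + 1) + convDen α n := by positivity
  have h_err := congrArg abs (mul_convDen_sub_convNum_mul_eq_neg_one_pow hα n)
  rw [abs_mul, abs_of_pos hD, abs_pow, abs_neg, abs_one, one_pow] at h_err
  rw [show α - convNum α (n + 1) / convDen α (n + 1) =
      (α * convDen α (n + 1) - convNum α (n + 1)) / convDen α (n + 1) by field_simp,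
    abs_div, abs_of_pos hQ, denRatio, eq_div_iff (by positivity)]
  field_simp
  linear_combination h_err

theorem inv_denRatio_succ (hα : Irrational α) (n : ℕ) :
    (denRatio α (n + 1))⁻¹ = ⌊completeQuot α (n + 1)⌋ + denRatio α n := by
  have hQ : (convDen α (n + 1) : ℝ) ≠ 0 := by exact_mod_cast (convDen_pos hα n).ne'
  rw [denRatio, denRatio, inv_div, convDen_succ_succ]
  push_cast
  field_simp

theorem completeQuot_add_denRatio (hα : Irrational α) (n : ℕ) :
    completeQuot α (n + 1) + denRatio α n =
      (completeQuot α (n + 2))⁻¹ + (denRatio α (n + 1))⁻¹ := by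
  rw [inv_denRatio_succ hα]
  linear_combination -floor_add_inv_completeQuot_succ (α := α) (n + 1)

theorem denRatio_pos (hα : Irrational α) (n : ℕ) : 0 < denRatio α (n + 1) :=
  div_pos (by exact_mod_cast convDen_pos hα n) (by exact_mod_cast convDen_pos hα (n + 1))

theorem denRatio_ne_inv_goldenRatio (n : ℕ) : denRatio α n ≠ φ⁻¹ := by
  have h := goldenRatio_irrational.inv.ne_rat (convDen α n / convDen α (n + 1))
  push_cast at h
  exact h.symm

theorem inv_goldenRatio_lt_denRatio (hα : Irrational α) (n : ℕ)
    (h₀ : completeQuot α (n + 1) + denRatio α n ≤ √5)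
    (h₁ : completeQuot α (n + 2) + denRatio α (n + 1) ≤ √5) : φ⁻¹ < denRatio α (n + 1) :=
  inv_goldenRatio_lt_of_add_le_sqrt_five (one_pos.trans (one_lt_completeQuot_succ hα (n + 1)))
    (denRatio_pos hα n) (denRatio_ne_inv_goldenRatio _) h₁ (completeQuot_add_denRatio hα n ▸ h₀)

theorem exists_sqrt_five_lt_completeQuot_add_denRatio (hα : Irrational α) (n : ℕ) :
    ∃ k, n ≤ k ∧ k ≤ n + 2 ∧ √5 < completeQuot α (k + 1) + denRatio α k := by
  by_contra! h
  have h₁ := inv_goldenRatio_lt_denRatio hα n (h n le_rfl (by omega))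
    (h (n + 1) (by omega) (by omega))
  have h₂ := inv_goldenRatio_lt_denRatio hα (n + 1) (h (n + 1) (by omega) (by omega))
    (h (n + 2) (by omega) le_rfl)
  have h_inv : φ < (denRatio α (n + 2))⁻¹ :=
    calc φ = 1 + φ⁻¹ := by rw [inv_goldenRatio, ← one_sub_goldenRatio]; ring
      _ < 1 + denRatio α (n + 1) := by linarith
      _ ≤ ⌊completeQuot α (n + 2)⌋ + denRatio α (n + 1) := by
        gcongr
        exact_mod_cast one_le_floor_completeQuot_succ hα (n + 1)
      _ = (denRatio α (n + 2))⁻¹ := (inv_denRatio_succ hα (n + 1)).symm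
  linarith [(lt_inv_comm₀ goldenRatio_pos (denRatio_pos hα (n + 1))).mp h_inv]

theorem abs_sub_convergent_lt (hα : Irrational α) (n : ℕ)
    (h : √5 < completeQuot α (n + 1) + denRatio α n) :
    |α - convNum α (n + 1) / convDen α (n + 1)| < 1 / (√5 * (convDen α (n + 1) : ℝ) ^ 2) := by
  have hQ : (0 : ℝ) < convDen α (n + 1) := by exact_mod_cast convDen_pos hα n
  rw [abs_sub_convergent hα n, mul_comm (√5)]
  gcongr

end ContinuedFraction

/-- Hurwitz: for every irrational `α`, there are infinitely many pairs of integers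
`(p, q)` with `q > 0` such that `|α - p/q| < 1/(√5 q²)`. -/
theorem stmt_1 (α : ℝ) (hα : Irrational α) :
    {pq : ℤ × ℤ | 0 < pq.2 ∧
      |α - (pq.1 : ℝ) / (pq.2 : ℝ)| < 1 / (Real.sqrt 5 * (pq.2 : ℝ) ^ 2)}.Infinite := by
  refine Set.Infinite.of_image Prod.snd (Set.infinite_of_not_bddAbove ?_)
  rintro ⟨b, hb⟩
  obtain ⟨k, hk, -, h_good⟩ := exists_sqrt_five_lt_completeQuot_add_denRatio hα (b.toNat + 1)
  have h_mem := hb ⟨(convNum α (k + 1), convDen α (k + 1)),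
    ⟨convDen_pos hα k, abs_sub_convergent_lt hα k h_good⟩, rfl⟩
  have := le_convDen hα k
  omega
end

section
/- The classical Lagrange spectrum L = { k(α) : α irrational, k(α) < ∞ } is a closed subset of ℝ, where k(α) = limsup over the continued-fraction shift: writing α = [a₀; a₁, a₂, ...], k(α) = limsup_{n→∞} ([aₙ; aₙ₊₁, ...] + [0; aₙ₋₁, ..., a₁]). -/
open Filter Topology

namespace Stmt18

/-- the shift by `m` -/
def S (m : ℤ) (θ : ℤ → ℕ) : ℤ → ℕ := fun i => θ (i + m)

/-- the compact set of bounded sequences -/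
def K (N : ℕ) : Set (ℤ → ℕ) := {θ | ∀ n : ℤ, 1 ≤ θ n ∧ θ n ≤ N}

/-- agreement on the window `[-R, R]` -/
def agree (R : ℕ) (x y : ℤ → ℕ) : Prop :=
  ∀ i : ℤ, |i| ≤ (R : ℤ) → x i = y i

lemma S_mem_K {N : ℕ} {θ : ℤ → ℕ} (h : θ ∈ K N) (m : ℤ) : S m θ ∈ K N :=
  fun n => h (n + m)

lemma S_S (m n : ℤ) (θ : ℤ → ℕ) : S m (S n θ) = S (n + m) θ := by
  funext i; simp only [S]; ring_nf

lemma isCompact_K (N : ℕ) : IsCompact (K N) := by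
  have : K N = Set.pi Set.univ (fun _ : ℤ => Set.Icc 1 N) := by
    ext θ; simp only [K, Set.mem_univ_pi, Set.mem_Icc, Set.mem_setOf_eq]
  rw [this]
  exact isCompact_univ_pi (fun _ => (Set.finite_Icc 1 N).isCompact)

/-- extraction of a convergent subsequence in `K` -/
lemma exists_subseq {N : ℕ} (u : ℕ → (ℤ → ℕ)) (hu : ∀ t, u t ∈ K N) :
    ∃ y ∈ K N, ∃ φ : ℕ → ℕ, StrictMono φ ∧ Tendsto (u ∘ φ) atTop (𝓝 y) :=
  (isCompact_K N).tendsto_subseq hu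

/-- convergence in the product topology = eventual coordinatewise equality -/
lemma tendsto_iff_coords (u : ℕ → (ℤ → ℕ)) (y : ℤ → ℕ) :
    Tendsto u atTop (𝓝 y) ↔ ∀ i : ℤ, ∀ᶠ t in atTop, u t i = y i := by
  rw [tendsto_pi_nhds]
  refine forall_congr' fun i => ?_
  rw [nhds_discrete, tendsto_pure]

/-- eventual agreement on windows from convergence -/
lemma eventually_agree {u : ℕ → (ℤ → ℕ)} {y : ℤ → ℕ}
    (h : Tendsto u atTop (𝓝 y)) (R : ℕ) :
    ∀ᶠ t in atTop, agree R (u t) y := by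
  rw [tendsto_iff_coords] at h
  have : ∀ᶠ t in atTop, ∀ i ∈ Finset.Icc (-(R:ℤ)) R, u t i = y i := by
    rw [eventually_all_finset]
    intro i _; exact h i
  refine this.mono fun t ht i hi => ht i ?_
  rw [Finset.mem_Icc]; exact abs_le.mp hi


/-- `f`-values converge together along coordinatewise-asymptotic sequences in `K`. -/
lemma gap_lemma {N : ℕ} {f : (ℤ → ℕ) → ℝ} (hf : Continuous f)
    {a b : ℕ → (ℤ → ℕ)} (ha : ∀ t, a t ∈ K N) (hb : ∀ t, b t ∈ K N)
    (hco : ∀ i : ℤ, ∀ᶠ t in atTop, a t i = b t i) :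
    Tendsto (fun t => f (a t) - f (b t)) atTop (𝓝 0) := by
  apply tendsto_of_subseq_tendsto
  intro ns hns
  obtain ⟨p, hp, φ, hφ, hconv⟩ := exists_subseq (fun t => a (ns t)) (fun t => ha _)
  obtain ⟨q, hq, ψ, hψ, hconv'⟩ := exists_subseq (fun t => b (ns (φ t))) (fun t => hb _)
  have hconv2 : Tendsto (fun t => a (ns (φ (ψ t)))) atTop (𝓝 p) :=
    hconv.comp hψ.tendsto_atTop
  have hconv3 : Tendsto (fun t => b (ns (φ (ψ t)))) atTop (𝓝 q) := hconv'
  have hpq : p = q := by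
    funext i
    have h1 := (tendsto_iff_coords _ _).mp hconv2 i
    have h2 := (tendsto_iff_coords _ _).mp hconv3 i
    have h3 : ∀ᶠ t in atTop, a (ns (φ (ψ t))) i = b (ns (φ (ψ t))) i := by
      have hmono : Tendsto (fun t => ns (φ (ψ t))) atTop atTop :=
        hns.comp ((hφ.comp hψ).tendsto_atTop)
      exact hmono.eventually (hco i)
    obtain ⟨t, h1t, h2t, h3t⟩ := (h1.and (h2.and h3)).exists
    rw [← h1t, h3t, h2t]
  refine ⟨fun t => φ (ψ t), ?_⟩
  have hfa : Tendsto (fun t => f (a (ns (φ (ψ t))))) atTop (𝓝 (f p)) :=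
    (hf.tendsto p).comp hconv2
  have hfb : Tendsto (fun t => f (b (ns (φ (ψ t))))) atTop (𝓝 (f q)) :=
    (hf.tendsto q).comp hconv3
  rw [hpq] at hfa
  simpa using hfa.sub hfb

lemma exists_bound (N : ℕ) {f : (ℤ → ℕ) → ℝ} (hf : Continuous f) :
    ∃ C : ℝ, ∀ x ∈ K N, |f x| ≤ C := by
  obtain ⟨C, hC⟩ := (isCompact_K N).exists_bound_of_continuousOn hf.continuousOn
  exact ⟨C, fun x hx => by simpa [Real.norm_eq_abs] using hC x hx⟩

lemma limsup_eq_of {u : ℕ → ℝ} {l : ℝ}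
    (hb : IsBoundedUnder (· ≤ ·) atTop u)
    (hcb : IsCoboundedUnder (· ≤ ·) atTop u)
    (h1 : ∀ ε : ℝ, 0 < ε → ∀ᶠ n in atTop, u n ≤ l + ε)
    (h2 : ∀ ε : ℝ, 0 < ε → ∃ᶠ n in atTop, l - ε ≤ u n) :
    limsup u atTop = l := by
  refine le_antisymm ?_ ?_
  · exact le_of_forall_pos_le_add fun ε hε => limsup_le_of_le hcb (h1 ε hε)
  · exact le_of_forall_sub_le fun ε hε => le_limsup_of_frequently_le (h2 ε hε) hb

lemma limsup_bounds {u : ℕ → ℝ} {l : ℝ}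
    (hb : IsBoundedUnder (· ≤ ·) atTop u)
    (hcb : IsCoboundedUnder (· ≤ ·) atTop u)
    (hl : limsup u atTop = l) :
    (∀ ε : ℝ, 0 < ε → ∀ᶠ n in atTop, u n ≤ l + ε) ∧
      (∀ ε : ℝ, 0 < ε → ∃ᶠ n in atTop, l - ε ≤ u n) := by
  constructor
  · intro ε hε
    have : limsup u atTop < l + ε := by rw [hl]; linarith
    exact (eventually_lt_of_limsup_lt this hb).mono fun n hn => hn.le
  · intro ε hε
    have : l - ε < limsup u atTop := by rw [hl]; linarith
    exact (frequently_lt_of_lt_limsup hcb this).mono fun n hn => hn.le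


/-- chain recurrence of `y` with `f`-values along chains at most `f y + ε` -/
def P (N : ℕ) (f : (ℤ → ℕ) → ℝ) (y : ℤ → ℕ) : Prop :=
  ∀ R : ℕ, ∀ ε : ℝ, 0 < ε → ∃ n : ℕ, 0 < n ∧ ∃ w : ℕ → ℤ → ℕ,
    (∀ j, w j ∈ K N) ∧ w 0 = y ∧ (∀ j, n ≤ j → w j = y) ∧
    (∀ j, j < n → agree R (S 1 (w j)) (w (j + 1))) ∧
    (∀ j, f (w j) ≤ f y + ε)

/-- Given a point of `K`, its limsup value is attained at a chain-recurrent point. -/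
lemma exists_P {N : ℕ} {f : (ℤ → ℕ) → ℝ} (hf : Continuous f) {θ : ℤ → ℕ} (hθ : θ ∈ K N)
    {l : ℝ} (hl : limsup (fun n : ℕ => f (S n θ)) atTop = l) :
    ∃ y ∈ K N, f y = l ∧ P N f y := by
  obtain ⟨C, hC⟩ := exists_bound N hf
  set u : ℕ → ℝ := fun n => f (S n θ) with hu
  have humem : ∀ n : ℕ, S (n : ℤ) θ ∈ K N := fun n => S_mem_K hθ n
  have hb : IsBoundedUnder (· ≤ ·) atTop u :=
    isBoundedUnder_of ⟨C, fun n => (abs_le.mp (hC _ (humem n))).2⟩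
  have hb' : IsBoundedUnder (· ≥ ·) atTop u :=
    isBoundedUnder_of ⟨-C, fun n => (abs_le.mp (hC _ (humem n))).1⟩
  have hcb : IsCoboundedUnder (· ≤ ·) atTop u := hb'.isCoboundedUnder_le
  obtain ⟨hev, hfreq⟩ := limsup_bounds hb hcb hl
  have hex : ∀ t : ℕ, ∃ᶠ k in atTop, l - 1 / (t + 1) ≤ u k :=
    fun t => hfreq _ (by positivity)
  obtain ⟨e, he, hegood⟩ := extraction_forall_of_frequently hex
  obtain ⟨y, hy, φ, hφ, hconv⟩ := exists_subseq (fun t => S (e t) θ) (fun t => humem _)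
  have hcomp : StrictMono (e ∘ φ) := he.comp hφ
  have hfy : Tendsto (fun t => u (e (φ t))) atTop (𝓝 (f y)) := (hf.tendsto y).comp hconv
  have hfyl : f y = l := by
    refine le_antisymm ?_ ?_
    · refine le_of_forall_pos_le_add fun ε hε => ?_
      refine le_of_tendsto hfy ?_
      exact (hcomp.tendsto_atTop).eventually (hev ε hε)
    · refine le_of_forall_sub_le fun ε hε => ?_
      refine ge_of_tendsto hfy ?_
      obtain ⟨T, hT⟩ := exists_nat_one_div_lt hε
      filter_upwards [eventually_ge_atTop T] with t ht
      have h1 : l - 1 / ((φ t : ℝ) + 1) ≤ u (e (φ t)) := hegood (φ t)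
      have h2 : ((T : ℝ) + 1) ≤ ((φ t : ℝ) + 1) := by
        have h0 : T ≤ φ t := le_trans ht hφ.le_apply
        have h0' : (T : ℝ) ≤ (φ t : ℝ) := Nat.cast_le.mpr h0
        linarith
      have h3 : 1 / ((φ t : ℝ) + 1) ≤ 1 / ((T : ℝ) + 1) :=
        one_div_le_one_div_of_le (by positivity) h2
      have h4 : 1 / ((T : ℝ) + 1) ≤ ε := hT.le
      linarith
  refine ⟨y, hy, hfyl, ?_⟩
  intro R ε hε
  obtain ⟨N₀, hN₀⟩ := eventually_atTop.mp (hev ε hε)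
  obtain ⟨T₁, hT₁⟩ := eventually_atTop.mp (eventually_agree hconv (R + 1))
  set t₁ := max T₁ N₀ with ht₁
  set m₁ := e (φ t₁) with hm₁
  set m₂ := e (φ (t₁ + 1)) with hm₂
  have hm₁N₀ : N₀ ≤ m₁ := le_trans (le_max_right _ _) hcomp.le_apply
  have hm₁₂ : m₁ < m₂ := hcomp (Nat.lt_succ_self t₁)
  have hag₁ : agree (R + 1) (S m₁ θ) y := hT₁ t₁ (le_max_left _ _)
  have hag₂ : agree (R + 1) (S m₂ θ) y := hT₁ (t₁ + 1) (le_trans (le_max_left _ _) (Nat.le_succ _))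
  set n := m₂ - m₁ with hn
  have hn1 : 0 < n := Nat.sub_pos_of_lt hm₁₂
  have hm₂eq : m₁ + n = m₂ := by omega
  refine ⟨n, hn1, fun j => if j = 0 then y else if n ≤ j then y else S ((m₁ + j : ℕ) : ℤ) θ,
    ?_, ?_, ?_, ?_, ?_⟩
  · intro j; dsimp only; split_ifs
    exacts [hy, hy, humem _]
  · simp
  · intro j hj; dsimp only; split_ifs <;> first | rfl | omega
  · intro j hj i hi
    obtain ⟨hiL, hiU⟩ := abs_le.mp hi
    have habs0 : |i| ≤ ((R + 1 : ℕ) : ℤ) := by rw [abs_le]; push_cast; omega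
    have habs1 : |i + 1| ≤ ((R + 1 : ℕ) : ℤ) := by rw [abs_le]; push_cast; omega
    show (if j = 0 then y else if n ≤ j then y else S ((m₁ + j : ℕ) : ℤ) θ) (i + 1) =
      (if j + 1 = 0 then y else if n ≤ j + 1 then y else S ((m₁ + (j + 1) : ℕ) : ℤ) θ) i
    rcases Nat.eq_zero_or_pos j with hj0 | hj0
    · subst hj0
      rw [if_pos rfl, if_neg (show ¬(0 + 1 = 0) by omega)]
      have L : y (i + 1) = θ ((i + 1) + ((m₁ : ℕ) : ℤ)) := (hag₁ (i + 1) habs1).symm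
      by_cases h1n : n ≤ 0 + 1
      · rw [if_pos h1n]
        have Rr : y i = θ (i + ((m₂ : ℕ) : ℤ)) := (hag₂ i habs0).symm
        rw [L, Rr]
        congr 1
        have hm : m₂ = m₁ + 1 := by omega
        rw [hm]; push_cast; ring
      · rw [if_neg h1n]
        rw [L]
        show _ = θ (i + ((m₁ + (0 + 1) : ℕ) : ℤ))
        congr 1; push_cast; ring
    · rw [if_neg (show ¬(j = 0) by omega), if_neg (show ¬(n ≤ j) by omega),
        if_neg (show ¬(j + 1 = 0) by omega)]
      by_cases hjn : n ≤ j + 1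
      · rw [if_pos hjn]
        have Rr : y i = θ (i + ((m₂ : ℕ) : ℤ)) := (hag₂ i habs0).symm
        show θ ((i + 1) + ((m₁ + j : ℕ) : ℤ)) = y i
        rw [Rr]; congr 1
        have hm : m₁ + j + 1 = m₂ := by omega
        push_cast [← hm]; ring
      · rw [if_neg hjn]
        show θ ((i + 1) + ((m₁ + j : ℕ) : ℤ)) = θ (i + ((m₁ + (j + 1) : ℕ) : ℤ))
        congr 1; push_cast; ring
  · intro j; dsimp only; split_ifs with h1 h2
    · linarith
    · linarith
    · rw [hfyl]
      exact hN₀ (m₁ + j) (le_trans hm₁N₀ (Nat.le_add_right _ _))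


/-- Realization: the value of a chain-recurrent point is an attained limsup value. -/
lemma P_realize {N : ℕ} {f : (ℤ → ℕ) → ℝ} (hf : Continuous f) {y : ℤ → ℕ}
    (hy : y ∈ K N) (hP : P N f y) :
    ∃ θ ∈ K N, limsup (fun t : ℕ => f (S t θ)) atTop = f y := by
  obtain ⟨C, hC⟩ := exists_bound N hf
  have hchains : ∀ R : ℕ, ∃ m : ℕ, 0 < m ∧ ∃ w : ℕ → ℤ → ℕ,
      (∀ j, w j ∈ K N) ∧ w 0 = y ∧ (∀ j, m ≤ j → w j = y) ∧
      (∀ j, j < m → agree R (S 1 (w j)) (w (j + 1))) ∧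
      (∀ j, f (w j) ≤ f y + 1 / ((R : ℝ) + 1)) :=
    fun R => hP R (1 / ((R : ℝ) + 1)) (by positivity)
  choose n hn w hwK hw0 hwend hwjump hwf using hchains
  -- block start times
  set T : ℕ → ℕ := fun R => ∑ r ∈ Finset.range R, n r with hT
  have hT0 : T 0 = 0 := by simp [hT]
  have hTsucc : ∀ R, T (R + 1) = T R + n R := by
    intro R; simp [hT, Finset.sum_range_succ]
  have hTmono : StrictMono T := by
    apply strictMono_nat_of_lt_succ
    intro R; rw [hTsucc]; have := hn R; omega
  have hTle : ∀ R, R ≤ T R := fun R => hTmono.le_apply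
  -- block index of a time
  set B : ℕ → ℕ := fun t => Nat.findGreatest (fun R => T R ≤ t) t with hB
  have hB1 : ∀ t, T (B t) ≤ t := by
    intro t
    have h0 : T 0 ≤ t := by rw [hT0]; exact Nat.zero_le t
    simp only [hB]
    exact Nat.findGreatest_spec (P := fun R => T R ≤ t) (Nat.zero_le t) h0
  have hBge : ∀ R t, T R ≤ t → R ≤ B t := by
    intro R t h
    simp only [hB]
    exact Nat.le_findGreatest (le_trans (hTle R) h) h
  have hB2 : ∀ t, t < T (B t + 1) := by
    intro t
    by_cases h : B t + 1 ≤ t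
    · have hgg : ¬ T (B t + 1) ≤ t := by
        have hlt : B t < B t + 1 := Nat.lt_succ_self _
        simp only [hB] at hlt h ⊢
        exact Nat.findGreatest_is_greatest (P := fun R => T R ≤ t) (n := t) hlt h
      omega
    · have := hTle (B t + 1); omega
  have hBspec : ∀ R t, T R ≤ t → t < T (R + 1) → B t = R := by
    intro R t h1 h2
    have hge := hBge R t h1
    have hle : ¬ (R + 1 ≤ B t) := by
      intro hcon
      have h3 : T (R + 1) ≤ T (B t) := hTmono.monotone hcon
      have := hB1 t; omega
    omega
  -- the concatenated pseudo-orbit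
  set z : ℕ → (ℤ → ℕ) := fun t => w (B t) (t - T (B t)) with hz
  have hzK : ∀ t, z t ∈ K N := by
    intro t; simp only [hz]; exact hwK _ _
  have hz1 : ∀ t, z (t + 1) = w (B t) (t + 1 - T (B t)) := by
    intro t
    by_cases hc : t + 1 < T (B t + 1)
    · have hBeq : B (t + 1) = B t :=
        hBspec (B t) (t + 1) (le_trans (hB1 t) (Nat.le_succ t)) hc
      simp only [hz]; rw [hBeq]
    · have he : t + 1 = T (B t + 1) := by have := hB2 t; omega
      have hB3 : B (t + 1) = B t + 1 := by
        apply hBspec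
        · omega
        · rw [hTsucc (B t + 1)]; have := hn (B t + 1); omega
      have hidx : t + 1 - T (B t) = n (B t) := by
        have := hB1 t; rw [hTsucc] at he; omega
      have l1 : t + 1 - T (B t + 1) = 0 := by omega
      simp only [hz]
      rw [hB3, l1, hidx, hw0, hwend (B t) (n (B t)) le_rfl]
  have hchain : ∀ t, ∀ i : ℤ, |i| ≤ ((B t : ℕ) : ℤ) → z (t + 1) i = z t (i + 1) := by
    intro t i hi
    have hs : t - T (B t) < n (B t) := by
      have h1 := hB1 t; have h2 := hB2 t; rw [hTsucc] at h2; omega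
    have hj := hwjump (B t) (t - T (B t)) hs i hi
    have hidx : t + 1 - T (B t) = (t - T (B t)) + 1 := by have := hB1 t; omega
    rw [hz1 t, hidx, ← hj]
    simp only [hz]
    rfl
  -- the shadowing point
  have hN1 : 1 ≤ N := le_trans (hy 0).1 (hy 0).2
  set x : ℤ → ℕ := fun m => if 0 ≤ m then z m.toNat 0 else 1 with hx
  have hxK : x ∈ K N := by
    intro m
    simp only [hx]
    split_ifs with h
    · exact hzK m.toNat 0
    · exact ⟨le_refl 1, hN1⟩
  have hxz : ∀ t : ℕ, x ((t : ℕ) : ℤ) = z t 0 := by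
    intro t; simp only [hx]
    rw [if_pos (Int.natCast_nonneg t)]
    simp
  have hfwd : ∀ j : ℕ, ∀ᶠ t : ℕ in atTop, x ((j : ℤ) + (t : ℤ)) = z t ((j : ℕ) : ℤ) := by
    intro j
    induction j with
    | zero =>
      refine Eventually.of_forall fun t => ?_
      have he : ((0 : ℕ) : ℤ) + (t : ℤ) = ((t : ℕ) : ℤ) := by push_cast; ring
      rw [he, hxz t]; norm_num
    | succ j ih =>
      obtain ⟨a, ha⟩ := eventually_atTop.mp ih
      filter_upwards [eventually_ge_atTop a, eventually_ge_atTop (T (j + 1))] with t h1 h2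
      have hBt : j + 1 ≤ B t := hBge (j + 1) t h2
      have habs : |(j : ℤ)| ≤ ((B t : ℕ) : ℤ) := by
        rw [abs_of_nonneg (Int.natCast_nonneg j)]
        exact_mod_cast Nat.le_of_succ_le hBt
      have e0 : (((j + 1 : ℕ)) : ℤ) = (j : ℤ) + 1 := by push_cast; ring
      have e1 : ((j : ℤ) + 1) + (t : ℤ) = (j : ℤ) + ((t + 1 : ℕ) : ℤ) := by push_cast; ring
      calc x (((j + 1 : ℕ)) + (t : ℤ)) = x ((j : ℤ) + ((t + 1 : ℕ) : ℤ)) := by rw [e0, e1]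
        _ = z (t + 1) ((j : ℕ) : ℤ) := ha (t + 1) (le_trans h1 (Nat.le_succ t))
        _ = z t ((j : ℤ) + 1) := hchain t j habs
        _ = z t (((j + 1 : ℕ)) : ℤ) := by rw [e0]
  have hbwd : ∀ j : ℕ, ∀ᶠ t : ℕ in atTop, x (-(j : ℤ) + (t : ℤ)) = z t (-(j : ℤ)) := by
    intro j
    induction j with
    | zero =>
      refine Eventually.of_forall fun t => ?_
      have he : -((0 : ℕ) : ℤ) + (t : ℤ) = ((t : ℕ) : ℤ) := by push_cast; ring
      rw [he, hxz t]; norm_num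
    | succ j ih =>
      obtain ⟨a, ha⟩ := eventually_atTop.mp ih
      filter_upwards [eventually_ge_atTop (a + 1), eventually_ge_atTop (T (j + 1) + 1)]
        with t h1 h2
      have ht1 : 1 ≤ t := le_trans (Nat.le_add_left 1 a) h1
      have hBt : j + 1 ≤ B (t - 1) := hBge (j + 1) (t - 1) (by omega)
      have habs : |(-((j : ℤ) + 1))| ≤ ((B (t - 1) : ℕ) : ℤ) := by
        rw [abs_neg, abs_of_nonneg (by positivity)]
        exact_mod_cast hBt
      have hstep : z t (-((j : ℤ) + 1)) = z (t - 1) (-(j : ℤ)) := by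
        have hc := hchain (t - 1) (-((j : ℤ) + 1)) habs
        rw [show t - 1 + 1 = t by omega] at hc
        rw [hc]
        congr 1
        ring
      have e0 : (((j + 1 : ℕ)) : ℤ) = (j : ℤ) + 1 := by push_cast; ring
      have e2 : -((j : ℤ) + 1) + (t : ℤ) = -(j : ℤ) + ((t - 1 : ℕ) : ℤ) := by
        have hc : ((t - 1 : ℕ) : ℤ) = (t : ℤ) - 1 := by omega
        rw [hc]; ring
      calc x (-(((j + 1 : ℕ)) : ℤ) + (t : ℤ)) = x (-(j : ℤ) + ((t - 1 : ℕ) : ℤ)) := by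
            rw [e0, e2]
        _ = z (t - 1) (-(j : ℤ)) := ha (t - 1) (by omega)
        _ = z t (-((j : ℤ) + 1)) := hstep.symm
        _ = z t (-(((j + 1 : ℕ)) : ℤ)) := by rw [e0]
  have hshadow : ∀ i : ℤ, ∀ᶠ t : ℕ in atTop, S ((t : ℕ) : ℤ) x i = z t i := by
    intro i
    rcases Int.natAbs_eq i with hcase | hcase
    · refine (hfwd i.natAbs).mono fun t ht => ?_
      show x (i + (t : ℤ)) = z t i
      rw [hcase]; exact ht
    · refine (hbwd i.natAbs).mono fun t ht => ?_
      show x (i + (t : ℤ)) = z t i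
      rw [hcase]; exact ht
  refine ⟨x, hxK, ?_⟩
  have humem : ∀ t : ℕ, S ((t : ℕ) : ℤ) x ∈ K N := fun t => S_mem_K hxK t
  have hb : IsBoundedUnder (· ≤ ·) atTop (fun t : ℕ => f (S t x)) :=
    isBoundedUnder_of ⟨C, fun t => (abs_le.mp (hC _ (humem t))).2⟩
  have hb' : IsBoundedUnder (· ≥ ·) atTop (fun t : ℕ => f (S t x)) :=
    isBoundedUnder_of ⟨-C, fun t => (abs_le.mp (hC _ (humem t))).1⟩
  have hcb : IsCoboundedUnder (· ≤ ·) atTop (fun t : ℕ => f (S t x)) :=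
    hb'.isCoboundedUnder_le
  have hgap : Tendsto (fun t : ℕ => f (S t x) - f (z t)) atTop (𝓝 0) :=
    gap_lemma hf humem hzK hshadow
  have hzf : ∀ R : ℕ, ∀ t, T R ≤ t → f (z t) ≤ f y + 1 / ((R : ℝ) + 1) := by
    intro R t hRt
    have h1 : f (z t) ≤ f y + 1 / ((B t : ℝ) + 1) := by
      simp only [hz]; exact hwf (B t) _
    have h2 : R ≤ B t := hBge R t hRt
    have h3 : 1 / ((B t : ℝ) + 1) ≤ 1 / ((R : ℝ) + 1) := by
      apply one_div_le_one_div_of_le (by positivity)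
      have h4 : (R : ℝ) ≤ (B t : ℝ) := Nat.cast_le.mpr h2
      linarith
    linarith
  have hzy : ∃ᶠ t in atTop, z t = y := by
    rw [frequently_atTop]
    intro a
    refine ⟨T a, hTle a, ?_⟩
    have hBa : B (T a) = a := hBspec a (T a) le_rfl (hTmono (Nat.lt_succ_self a))
    simp only [hz]; rw [hBa, Nat.sub_self, hw0]
  apply limsup_eq_of hb hcb
  · intro ε hε
    obtain ⟨R, hR⟩ := exists_nat_one_div_lt (show (0 : ℝ) < ε / 2 by positivity)
    have hev1 : ∀ᶠ t : ℕ in atTop, |f (S t x) - f (z t)| < ε / 2 :=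
      (NormedAddCommGroup.tendsto_nhds_zero.mp hgap (ε / 2) (by positivity)).mono
        fun t ht => by simpa [Real.norm_eq_abs] using ht
    filter_upwards [hev1, eventually_ge_atTop (T R)] with t h1 h2
    have h3 := hzf R t h2
    have h4 := (abs_lt.mp h1).2
    have h5 : 1 / ((R : ℝ) + 1) < ε / 2 := hR
    linarith
  · intro ε hε
    have hev1 : ∀ᶠ t : ℕ in atTop, |f (S t x) - f (z t)| < ε :=
      (NormedAddCommGroup.tendsto_nhds_zero.mp hgap ε hε).mono
        fun t ht => by simpa [Real.norm_eq_abs] using ht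
    refine (hzy.and_eventually hev1).mono ?_
    rintro t ⟨h1, h2⟩
    have h3 := (abs_lt.mp h2).1
    rw [h1] at h3
    linarith

/-- The set of values of chain-recurrent points is closed. -/
lemma isClosed_PSet (N : ℕ) {f : (ℤ → ℕ) → ℝ} (hf : Continuous f) :
    IsClosed {l : ℝ | ∃ y ∈ K N, f y = l ∧ P N f y} := by
  rw [← isSeqClosed_iff_isClosed]
  intro ls l hmem hlim
  simp only [Set.mem_setOf_eq] at hmem ⊢
  choose y hyK hyf hyP using hmem
  obtain ⟨Y, hY, φ, hφ, hconv⟩ := exists_subseq y hyK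
  have h1 : Tendsto (fun k => f (y (φ k))) atTop (𝓝 (f Y)) := (hf.tendsto Y).comp hconv
  have hfY : f Y = l := by
    have h2 : Tendsto (fun k => f (y (φ k))) atTop (𝓝 l) := by
      have he : (fun k => f (y (φ k))) = fun k => ls (φ k) := funext fun k => hyf (φ k)
      rw [he]
      exact hlim.comp hφ.tendsto_atTop
    exact tendsto_nhds_unique h1 h2
  refine ⟨Y, hY, hfY, ?_⟩
  intro R ε hε
  have hagev := eventually_agree hconv (R + 1)
  have hfev : ∀ᶠ k in atTop, |f (y (φ k)) - f Y| < ε / 2 := by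
    have h3 : Tendsto (fun k => f (y (φ k)) - f Y) atTop (𝓝 0) := by
      simpa using h1.sub (tendsto_const_nhds : Tendsto (fun _ : ℕ => f Y) atTop (𝓝 (f Y)))
    exact (NormedAddCommGroup.tendsto_nhds_zero.mp h3 (ε / 2) (by positivity)).mono
      fun k hk => by simpa [Real.norm_eq_abs] using hk
  obtain ⟨k, hagk, hfk⟩ := (hagev.and hfev).exists
  obtain ⟨m, hm, w, hwK, hw0, hwend, hwjump, hwf⟩ := hyP (φ k) (R + 1) (ε / 2) (by positivity)
  have hww : ∀ j, ∀ i : ℤ, |i| ≤ ((R + 1 : ℕ) : ℤ) →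
      (if j = 0 then Y else if m ≤ j then Y else w j) i = w j i := by
    intro j i hi
    split_ifs with h0 hm'
    · subst h0; rw [hw0]; exact (hagk i hi).symm
    · rw [hwend j hm']; exact (hagk i hi).symm
    · rfl
  refine ⟨m, hm, fun j => if j = 0 then Y else if m ≤ j then Y else w j, ?_, ?_, ?_, ?_, ?_⟩
  · intro j; dsimp only; split_ifs; exacts [hY, hY, hwK j]
  · simp
  · intro j hj; dsimp only; split_ifs <;> first | rfl | omega
  · intro j hj i hi
    obtain ⟨hiL, hiU⟩ := abs_le.mp hi
    have habs0 : |i| ≤ ((R + 1 : ℕ) : ℤ) := by rw [abs_le]; push_cast; omega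
    have habs1 : |i + 1| ≤ ((R + 1 : ℕ) : ℤ) := by rw [abs_le]; push_cast; omega
    show (if j = 0 then Y else if m ≤ j then Y else w j) (i + 1) =
      (if j + 1 = 0 then Y else if m ≤ j + 1 then Y else w (j + 1)) i
    rw [hww j (i + 1) habs1, hww (j + 1) i habs0]
    exact hwjump j hj i habs0
  · intro j; dsimp only; split_ifs with h0 hm'
    · linarith
    · linarith
    · have h5 := hwf j
      have h6 := (abs_lt.mp hfk).2
      linarith

end Stmt18

/-- Closedness of the dynamically-defined Lagrange spectrum over a bounded-entry
subshift: for the shift on sequences `θ : ℤ → ℕ` with entries `1 ≤ θ n ≤ N`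
(a compact subshift of `(ℕ*)^ℤ`) and any continuous `f`, the set
`{ limsup_{n→∞} f(σⁿ θ) }` is a closed subset of `ℝ`. The classical Lagrange
spectrum `L = { k(α) : α irrational, k(α) < ∞ }` is obtained from
`f(θ) = [a₀; a₁, …] + [0; a₋₁, a₋₂, …]`, whose values over bounded sequences make up
exactly the finite Lagrange values; its closedness is this statement. -/
theorem stmt_18 (N : ℕ) (f : (ℤ → ℕ) → ℝ) (hf : Continuous f) :
    IsClosed {ℓ : ℝ | ∃ θ : ℤ → ℕ, (∀ n : ℤ, 1 ≤ θ n ∧ θ n ≤ N) ∧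
      ℓ = Filter.limsup (fun n : ℕ => f (fun i => θ (i + n))) Filter.atTop} := by
  have hset : {ℓ : ℝ | ∃ θ : ℤ → ℕ, (∀ n : ℤ, 1 ≤ θ n ∧ θ n ≤ N) ∧
      ℓ = Filter.limsup (fun n : ℕ => f (fun i => θ (i + n))) Filter.atTop} =
      {l : ℝ | ∃ y ∈ Stmt18.K N, f y = l ∧ Stmt18.P N f y} := by
    ext l
    simp only [Set.mem_setOf_eq]
    constructor
    · rintro ⟨θ, hθ, rfl⟩
      exact Stmt18.exists_P hf hθ rfl
    · rintro ⟨y, hy, hfy, hP⟩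
      obtain ⟨θ, hθ, hls⟩ := Stmt18.P_realize hf hy hP
      refine ⟨θ, hθ, ?_⟩
      show l = Filter.limsup (fun t : ℕ => f (Stmt18.S t θ)) Filter.atTop
      rw [hls, hfy]
  rw [hset]
  exact Stmt18.isClosed_PSet N hf
end
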